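/- arXiv:1612.08941 — 2 statements merged into one kernel-verified Lean document; each statement's English description precedes it below -/
import Mathlib

section
/- Let D be a ring, σ, τ ring endomorphisms of D, and ρ ∈ D such that σ(τ(d))·ρ = ρ·τ(σ(d)) for all d ∈ D. If τ∘σ is surjective, then ρ is a left normal element of D (ρD ⊆ Dρ); if σ∘τ is surjective, then ρ is a right normal element of D (Dρ ⊆ ρD). -/
/-- If `στ(d)·ρ = ρ·τσ(d)` for all `d`, then `ρ` is left normal when `τ∘σ` is
surjective, and right normal when `σ∘τ` is surjective. -/
theorem rho_normality_from_diskew_relation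
    {D : Type*} [Ring D] (σ τ : D →+* D) (ρ : D)
    (h : ∀ d : D, σ (τ d) * ρ = ρ * τ (σ d)) :
    (Function.Surjective (⇑τ ∘ ⇑σ) → ∀ d : D, ∃ d' : D, ρ * d = d' * ρ) ∧
    (Function.Surjective (⇑σ ∘ ⇑τ) → ∀ d : D, ∃ d' : D, d * ρ = ρ * d') := by
  constructor
  · intro hs d
    obtain ⟨e, he⟩ := hs d
    exact ⟨σ (τ e), by rw [h e, Function.comp_apply] at *; rw [← he]⟩
  · intro hs d
    obtain ⟨e, he⟩ := hs d
    exact ⟨τ (σ e), by rw [Function.comp_apply] at he; rw [← he, h e]⟩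
end

section
/- Let p be a prime and n a nonzero natural number with p ∣ n. Write v = v_p(n) for the p-adic valuation of n and set ñ = n − p^v (the p-adic neighbour of n). Then 0 ≤ ñ < n, the binomial coefficient C(n, ñ) is not divisible by p, C(n, i) is divisible by p for every i with ñ < i < n, and p ∣ ñ. -/
/-- Properties of the `p`-adic neighbour `ñ = n - p^{v_p(n)}` of a nonzero `n`
divisible by `p`: `ñ < n`, `p ∤ C(n, ñ)`, `p ∣ C(n, i)` for all `ñ < i < n`,
and `p ∣ ñ`. -/
theorem p_adic_neighbour_properties
    (p n : ℕ) (hp : p.Prime) (hn : n ≠ 0) (hpn : p ∣ n) :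
    n - p ^ (n.factorization p) < n ∧
    ¬ p ∣ n.choose (n - p ^ (n.factorization p)) ∧
    (∀ i : ℕ, n - p ^ (n.factorization p) < i → i < n → p ∣ n.choose i) ∧
    p ∣ n - p ^ (n.factorization p) := by
  haveI : Fact p.Prime := ⟨hp⟩
  set v := n.factorization p with hvdef
  have hq : p ^ v ∣ n := Nat.ordProj_dvd n p
  have hnpos : 0 < n := Nat.pos_of_ne_zero hn
  have hqn : p ^ v ≤ n := Nat.le_of_dvd hnpos hq
  have hqpos : 0 < p ^ v := pow_pos hp.pos v
  have hv1 : 1 ≤ v := hp.factorization_pos_of_dvd hn hpn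
  have hnot : ¬ p ^ (v + 1) ∣ n := Nat.pow_succ_factorization_not_dvd hn hp
  have hlt : n - p ^ v < n := Nat.sub_lt hnpos hqpos
  have hb : Nat.log p n < Nat.log p n + 1 := Nat.lt_succ_self _
  have hvlog : v ≤ Nat.log p n := (Nat.le_log_iff_pow_le hp.one_lt hn).mpr hqn
  refine ⟨hlt, ?_, ?_, ?_⟩
  · -- ¬ p ∣ C(n, n - p^v) : no carries when adding p^v and n - p^v in base p
    have hsub : n - (n - p ^ v) = p ^ v := Nat.sub_sub_self hqn
    have hval : padicValNat p (n.choose (n - p ^ v)) = 0 := by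
      rw [padicValNat_choose (Nat.sub_le n _) hb, Finset.card_eq_zero,
        Finset.filter_eq_empty_iff]
      intro i hi
      rw [Finset.mem_Ico] at hi
      rw [hsub]
      have hipos : 0 < p ^ i := pow_pos hp.pos i
      rcases le_or_gt i v with hiv | hiv
      · -- low digits: both summands ≡ 0 mod p^i
        have h1 : p ^ i ∣ p ^ v := pow_dvd_pow p hiv
        have h2 : p ^ i ∣ n - p ^ v := Nat.dvd_sub (h1.trans hq) h1
        rw [Nat.mod_eq_zero_of_dvd h2, Nat.mod_eq_zero_of_dvd h1]
        omega
      · -- high digits: digit sum is just the corresponding digits of n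
        have hqi : p ^ v < p ^ i := Nat.pow_lt_pow_right hp.one_lt hiv
        have hdm := Nat.div_add_mod n (p ^ i)
        set r := n % p ^ i with hr
        have hrlt : r < p ^ i := Nat.mod_lt _ hipos
        have hqr : p ^ v ∣ r :=
          (Nat.dvd_mod_iff (pow_dvd_pow p hiv.le)).mpr hq
        have hrne : r ≠ 0 := by
          intro h0
          apply hnot
          have : p ^ i ∣ n := Nat.dvd_of_mod_eq_zero h0
          exact (pow_dvd_pow p (by omega : v + 1 ≤ i)).trans this
        have hqler : p ^ v ≤ r := Nat.le_of_dvd (Nat.pos_of_ne_zero hrne) hqr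
        have hmod : (n - p ^ v) % p ^ i = r - p ^ v := by
          have h5 : n - p ^ v = p ^ i * (n / p ^ i) + (r - p ^ v) := by
            calc n - p ^ v = p ^ i * (n / p ^ i) + r - p ^ v := by rw [hdm]
              _ = p ^ i * (n / p ^ i) + (r - p ^ v) := Nat.add_sub_assoc hqler _
          rw [h5, Nat.mul_add_mod, Nat.mod_eq_of_lt (by omega)]
        rw [hmod, Nat.mod_eq_of_lt hqi]
        omega
    intro hdvd
    have h6 := (hp.dvd_iff_one_le_factorization (Nat.choose_pos (Nat.sub_le n _)).ne').mp hdvd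
    rw [Nat.factorization_def _ hp, hval] at h6
    omega
  · -- middle binomial coefficients: carry at digit v
    intro i hi1 hi2
    have hkn : i ≤ n := le_of_lt hi2
    set j := n - i with hj
    have hj1 : 0 < j := by omega
    have hj2 : j < p ^ v := by omega
    have hmem : v ∈ (Finset.Ico 1 (Nat.log p n + 1)).filter
        fun t => p ^ t ≤ i % p ^ t + (n - i) % p ^ t := by
      refine Finset.mem_filter.mpr ⟨Finset.mem_Ico.mpr ⟨hv1, by omega⟩, ?_⟩
      obtain ⟨c, hc⟩ : p ^ v ∣ n - p ^ v := Nat.dvd_sub hq dvd_rfl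
      have h7 : i = p ^ v * c + (p ^ v - j) := by rw [← hc]; omega
      rw [← hj, Nat.mod_eq_of_lt hj2, h7, Nat.mul_add_mod,
        Nat.mod_eq_of_lt (by omega)]
      omega
    have hval : 1 ≤ padicValNat p (n.choose i) := by
      rw [padicValNat_choose hkn hb]
      exact Finset.card_pos.mpr ⟨v, hmem⟩
    have h8 := (hp.dvd_iff_one_le_factorization (Nat.choose_pos hkn).ne').mpr
    rw [Nat.factorization_def _ hp] at h8
    exact h8 hval
  · exact Nat.dvd_sub hpn (dvd_pow_self p (by omega : v ≠ 0))
end
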